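/- For every f ∈ (1/2, 1), distillation of two equal-fidelity links strictly improves the fidelity: F_distill(f, f) > f. (Equivalently, the polynomial identity 1 − 7f + 14f² − 8f³ = (1 − f)(4f − 1)(2f − 1) shows the numerator of F_distill(f,f) − f is positive on (1/2,1).) -/
import Mathlib


/-- Output fidelity of the BBPSSW distillation protocol on two isotropic states
of fidelities `f1` and `f2`. -/
noncomputable def Fdistill (f1 f2 : ℝ) : ℝ :=
  (1 - (f1 + f2) + 10 * f1 * f2) / (5 - 2 * (f1 + f2) + 8 * f1 * f2)

theorem stmt_6 (f : ℝ) (hf : f ∈ Set.Ioo (1/2 : ℝ) 1) :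
    Fdistill f f > f ∧
    1 - 7 * f + 14 * f ^ 2 - 8 * f ^ 3 = (1 - f) * (4 * f - 1) * (2 * f - 1) := by
  obtain ⟨h1, h2⟩ := hf
  have hden : (0:ℝ) < 5 - 2 * (f + f) + 8 * f * f := by nlinarith
  constructor
  · rw [Fdistill, gt_iff_lt, lt_div_iff₀ hden]
    nlinarith [mul_pos (mul_pos (sub_pos.2 h2) (by linarith : (0:ℝ) < 4*f-1)) (by linarith : (0:ℝ) < 2*f-1)]
  · ring
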